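/- Let k1, k2, k3 > 0 and K = diag(k1,k2,k3). Let x ∈ ℝ³ with x ≠ 0, set θ = ‖x‖, u = x/θ, and let G = I₃ + sin(θ)·û + (1 − cos(θ))·û², where û is the hat map of u. Then (1/2)·tr(K(I₃ − G)) = ((1 − cos θ)/(2‖x‖²))·[(k2+k3)·x1² + (k1+k3)·x2² + (k1+k2)·x3²]. -/

import Mathlib

open Matrix

noncomputable section

/-- Euclidean norm on ℝ³. -/
def euclNorm (x : Fin 3 → ℝ) : ℝ := Real.sqrt (∑ i, x i ^ 2)

/-- The hat map: sends `x ∈ ℝ³` to the skew-symmetric matrix `x̂`. -/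
def hat (x : Fin 3 → ℝ) : Matrix (Fin 3) (Fin 3) ℝ :=
  !![0, -x 2, x 1; x 2, 0, -x 0; -x 1, x 0, 0]

/-! Against the diagonal matrix `K` only diagonals matter: `û` has zero diagonal, and the
diagonal of `û²` is `uᵢ² - ‖u‖²`, which turns the trace into the stated quadratic form in
`u = x / θ`. -/

theorem trace_diagonal_mul_hat (k u : Fin 3 → ℝ) : (diagonal k * hat u).trace = 0 := by
  simp [trace, hat, Fin.sum_univ_three]

theorem trace_diagonal_mul_hat_mul_hat (k u : Fin 3 → ℝ) :
    (diagonal k * (hat u * hat u)).trace =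
      -((k 1 + k 2) * u 0 ^ 2 + (k 0 + k 2) * u 1 ^ 2 + (k 0 + k 1) * u 2 ^ 2) := by
  simp [trace, hat, mul_apply, Fin.sum_univ_three]
  ring

theorem stmt7_general (k1 k2 k3 : ℝ)
    (K : Matrix (Fin 3) (Fin 3) ℝ) (hK : K = Matrix.diagonal ![k1, k2, k3])
    (x : Fin 3 → ℝ)
    (θ : ℝ) (hθ : θ = euclNorm x)
    (u : Fin 3 → ℝ) (hu : u = θ⁻¹ • x)
    (G : Matrix (Fin 3) (Fin 3) ℝ)
    (hG : G = 1 + Real.sin θ • hat u + (1 - Real.cos θ) • (hat u * hat u)) :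
    (1 / 2) * (K * (1 - G)).trace =
      ((1 - Real.cos θ) / (2 * euclNorm x ^ 2)) *
        ((k2 + k3) * x 0 ^ 2 + (k1 + k3) * x 1 ^ 2 + (k1 + k2) * x 2 ^ 2) := by
  have hKG : K * (1 - G) =
      -(Real.sin θ • (K * hat u) + (1 - Real.cos θ) • (K * (hat u * hat u))) := by
    rw [hG, add_assoc, sub_add_cancel_left, Matrix.mul_neg, Matrix.mul_add, Matrix.mul_smul,
      Matrix.mul_smul]
  rw [hKG, trace_neg, trace_add, trace_smul, trace_smul, hK, trace_diagonal_mul_hat,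
    trace_diagonal_mul_hat_mul_hat, hu, ← hθ]
  simp only [Pi.smul_apply, smul_eq_mul, cons_val_zero, cons_val_one, cons_val_two, tail_cons,
    head_cons]
  field_simp
  ring

theorem stmt7 (k1 k2 k3 : ℝ)
    (hk1 : 0 < k1) (hk2 : 0 < k2) (hk3 : 0 < k3)
    (K : Matrix (Fin 3) (Fin 3) ℝ) (hK : K = Matrix.diagonal ![k1, k2, k3])
    (x : Fin 3 → ℝ) (hx : x ≠ 0)
    (θ : ℝ) (hθ : θ = euclNorm x)
    (u : Fin 3 → ℝ) (hu : u = θ⁻¹ • x)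
    (G : Matrix (Fin 3) (Fin 3) ℝ)
    (hG : G = 1 + Real.sin θ • hat u + (1 - Real.cos θ) • (hat u * hat u)) :
    (1 / 2) * (K * (1 - G)).trace =
      ((1 - Real.cos θ) / (2 * euclNorm x ^ 2)) *
        ((k2 + k3) * x 0 ^ 2 + (k1 + k3) * x 1 ^ 2 + (k1 + k2) * x 2 ^ 2) :=
  stmt7_general k1 k2 k3 K hK x θ hθ u hu G hG
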